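/- arXiv:2011.01093 — 4 statements merged into one kernel-verified Lean document; each statement's English description precedes it below -/
import Mathlib

section
/- For a square matrix A, T ≥ 0 and i ∈ ℕ, the identity (T^{i+1}/(i+1)!) Γ_{ω,i}(T) = ∫_0^T (σ^i / i!) e^{A(T-σ)} dσ holds, where Γ_{ω,i}(T) = Σ_{j=0}^∞ ((i+1)!/(i+1+j)!) A^j T^j. -/
/-!
Expand `exp ((T - σ) • A)` into its power series and integrate term by term (the series is
dominated between `0` and `T` by the exponential series of `|T| • A`). The `j`-th term is then the
convolution integral `∫₀ᵀ σ^i/i! · (T-σ)^j/j! dσ = T^(i+j+1)/(i+j+1)!`, proved by induction on `j`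
with one integration by parts per step.
-/

open MeasureTheory Matrix Nat

attribute [local instance] Matrix.linftyOpNormedAddCommGroup Matrix.linftyOpNormedSpace

theorem hasDerivAt_pow_succ_div_factorial (n : ℕ) (x : ℝ) :
    HasDerivAt (fun x : ℝ => x ^ (n + 1) / (n + 1)!) (x ^ n / n !) x := by
  refine ((hasDerivAt_pow (n + 1) x).div_const _).congr_deriv ?_
  push_cast [Nat.factorial_succ, Nat.add_sub_cancel]
  field_simp

theorem hasDerivAt_sub_pow_succ_div_factorial (n : ℕ) (T x : ℝ) :
    HasDerivAt (fun x : ℝ => (T - x) ^ (n + 1) / (n + 1)!) (-((T - x) ^ n / n !)) x := by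
  simpa [Function.comp_def] using
    (hasDerivAt_pow_succ_div_factorial n (T - x)).comp x ((hasDerivAt_id x).const_sub T)

theorem integral_pow_div_factorial_mul_sub_pow_div_factorial (T : ℝ) (i j : ℕ) :
    ∫ x in (0 : ℝ)..T, x ^ i / i ! * ((T - x) ^ j / j !) = T ^ (i + j + 1) / (i + j + 1)! := by
  induction j generalizing i with
  | zero =>
    simp only [pow_zero, Nat.factorial_zero, Nat.cast_one, div_one, mul_one, add_zero,
      intervalIntegral.integral_div, integral_pow]
    push_cast [Nat.factorial_succ]
    field_simp
    ring
  | succ j ih =>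
    have hparts : (∫ x in (0 : ℝ)..T, x ^ i / i ! * ((T - x) ^ (j + 1) / (j + 1)!)) -
        ∫ x in (0 : ℝ)..T, x ^ (i + 1) / (i + 1)! * ((T - x) ^ j / j !) = 0 := by
      rw [← intervalIntegral.integral_sub (by apply Continuous.intervalIntegrable; fun_prop)
        (by apply Continuous.intervalIntegrable; fun_prop)]
      simpa [sub_eq_add_neg] using intervalIntegral.integral_deriv_mul_eq_sub (a := 0) (b := T)
        (fun x _ => hasDerivAt_pow_succ_div_factorial i x)
        (fun x _ => hasDerivAt_sub_pow_succ_div_factorial j T x)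
        (by apply Continuous.intervalIntegrable; fun_prop)
        (by apply Continuous.intervalIntegrable; fun_prop)
    rw [sub_eq_zero.1 hparts, ih, Nat.add_right_comm i 1 j, add_assoc i j 1]

section

variable {𝔸 : Type*} [NormedRing 𝔸] [NormedAlgebra ℝ 𝔸]

theorem summable_pow_div_factorial_mul_norm_pow (t : ℝ) (a : 𝔸) :
    Summable fun n => |t| ^ n / n ! * ‖a ^ n‖ := by
  refine (NormedSpace.norm_expSeries_summable' (𝕂 := ℝ) (t • a)).congr fun n => ?_
  rw [smul_pow, norm_smul, norm_smul, norm_inv, Real.norm_natCast, norm_pow, Real.norm_eq_abs]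
  ring

variable [CompleteSpace 𝔸]

theorem hasSum_pow_div_factorial_smul_exp (t : ℝ) (a : 𝔸) :
    HasSum (fun n => (t ^ n / n !) • a ^ n) (NormedSpace.exp (t • a)) := by
  convert NormedSpace.exp_series_hasSum_exp' (𝕂 := ℝ) (t • a) using 2 with n
  rw [smul_pow, smul_smul, div_eq_inv_mul]

theorem hasSum_integral_pow_div_factorial_smul_exp (a : 𝔸) (T : ℝ) (i : ℕ) :
    HasSum (fun j => (T ^ (i + j + 1) / (i + j + 1)!) • a ^ j)
      (∫ σ in (0 : ℝ)..T, (σ ^ i / i !) • NormedSpace.exp ((T - σ) • a)) := by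
  have hterm (j : ℕ) : ∫ σ in (0 : ℝ)..T, (σ ^ i / i ! * ((T - σ) ^ j / j !)) • a ^ j =
      (T ^ (i + j + 1) / (i + j + 1)!) • a ^ j := by
    rw [intervalIntegral.integral_smul_const,
      integral_pow_div_factorial_mul_sub_pow_div_factorial]
  simp only [← hterm]
  refine intervalIntegral.hasSum_integral_of_dominated_convergence
    (fun j _ => |T| ^ i / i ! * (|T| ^ j / j ! * ‖a ^ j‖))
    (fun j => (by fun_prop : Continuous _).aestronglyMeasurable) (fun j => ?_)
    (.of_forall fun _ _ => (summable_pow_div_factorial_mul_norm_pow T a).mul_left _)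
    intervalIntegrable_const
    (.of_forall fun σ _ => by
      simpa only [smul_smul] using
        (hasSum_pow_div_factorial_smul_exp (T - σ) a).const_smul (σ ^ i / i ! : ℝ))
  refine .of_forall fun σ hσ => ?_
  have hσ' := Set.uIoc_subset_uIcc hσ
  have h₁ : |σ| ≤ |T| := by simpa using Set.abs_sub_left_of_mem_uIcc hσ'
  have h₂ : |T - σ| ≤ |T| := by simpa using Set.abs_sub_right_of_mem_uIcc hσ'
  rw [norm_smul, norm_mul, norm_div, norm_div, norm_pow, norm_pow, Real.norm_natCast,
    Real.norm_natCast, Real.norm_eq_abs, Real.norm_eq_abs, mul_assoc]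
  gcongr

end

attribute [local instance] Matrix.linftyOpNormedRing Matrix.linftyOpNormedAlgebra

theorem stmt4_general {n : ℕ} (A : Matrix (Fin n) (Fin n) ℝ) (T : ℝ) (i : ℕ) :
    (T ^ (i + 1) / (i + 1).factorial : ℝ) •
        (∑' j : ℕ, (((i + 1).factorial : ℝ) / ((i + 1 + j).factorial) * T ^ j) • A ^ j) =
      ∫ σ in (0 : ℝ)..T, (σ ^ i / i.factorial : ℝ) • NormedSpace.exp ((T - σ) • A) := by
  rw [← tsum_const_smul'']
  -- not `rw`: the statement's instances match those of `linftyOpNormedRing` only up to unfolding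
  refine (tsum_congr fun j => ?_).trans (hasSum_integral_pow_div_factorial_smul_exp A T i).tsum_eq
  rw [smul_smul, Nat.add_right_comm i 1 j]
  congr 1
  field_simp
  ring

/-- `(T^{i+1}/(i+1)!) Γ_{ω,i}(T) = ∫_0^T (σ^i/i!) e^{A(T-σ)} dσ`. -/
theorem stmt4 {n : ℕ} (A : Matrix (Fin n) (Fin n) ℝ) (T : ℝ) (hT : 0 ≤ T) (i : ℕ) :
    (T ^ (i + 1) / (i + 1).factorial : ℝ) •
        (∑' j : ℕ, (((i + 1).factorial : ℝ) / ((i + 1 + j).factorial) * T ^ j) • A ^ j) =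
      ∫ σ in (0 : ℝ)..T, (σ ^ i / i.factorial : ℝ) • NormedSpace.exp ((T - σ) • A) :=
  stmt4_general A T i
end

section
/- Combining the previous two results: if ė(t) = F e(t) + G w(t), ‖w(t)‖ ≤ ε for all t, and there exist symmetric positive definite P, δ > 0, α > 0 with [[PF + FᵀP + 2δP, PG],[GᵀP, −I]] ⪯ 0 and P ⪰ α KᵀK, then limsup_{t→∞} ‖K e(t)‖ ≤ ε √(1/(2αδ)) for any initial condition e(t_0). -/
/-! `V(t) = e(t)ᵀ P e(t)` is a Lyapunov function: along the error dynamics the LMI gives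
`V' ≤ -2δ V + ‖w‖² ≤ -2δ V + ε²`, so by Grönwall `V(t) ≤ ε²/(2δ) + (V(0) - ε²/(2δ)) e^{-2δt}`,
while `α KᵀK ⪯ P` gives `α ‖K e(t)‖² ≤ V(t)`. -/

open Matrix Filter Topology

section Derivatives

variable {m : Type*} [Fintype m] {s : ℝ}

theorem HasDerivAt.dotProduct {f g : ℝ → m → ℝ} {f' g' : m → ℝ}
    (hf : HasDerivAt f f' s) (hg : HasDerivAt g g' s) :
    HasDerivAt (fun t => f t ⬝ᵥ g t) (f' ⬝ᵥ g s + f s ⬝ᵥ g') s := by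
  have := HasDerivAt.fun_sum (u := Finset.univ) fun i _ =>
    (hasDerivAt_pi.1 hf i).fun_mul (hasDerivAt_pi.1 hg i)
  simpa only [_root_.dotProduct, Finset.sum_add_distrib] using this

theorem HasDerivAt.mulVec {n : Type*} [Fintype n] (A : Matrix n m ℝ) {f : ℝ → m → ℝ}
    {f' : m → ℝ} (hf : HasDerivAt f f' s) : HasDerivAt (fun t => A *ᵥ f t) (A *ᵥ f') s :=
  (LinearMap.toContinuousLinearMap (Matrix.mulVecLin A)).hasFDerivAt.comp_hasDerivAt s hf

end Derivatives

section Quadratic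

variable {m n : Type*} [Fintype m] [Fintype n]

theorem Matrix.PosSemidef.dotProduct_mulVec_le {P Q : Matrix m m ℝ} (h : (P - Q).PosSemidef)
    (x : m → ℝ) : x ⬝ᵥ Q *ᵥ x ≤ x ⬝ᵥ P *ᵥ x := by
  have := h.dotProduct_mulVec_nonneg x
  rw [star_trivial, sub_mulVec, dotProduct_sub] at this
  linarith

theorem Matrix.PosSemidef.dotProduct_mulVec_fromBlocks_le [DecidableEq n]
    {A : Matrix m m ℝ} {B : Matrix m n ℝ} {C : Matrix n m ℝ}
    (h : (-fromBlocks A B C (-1)).PosSemidef) (x : m → ℝ) (y : n → ℝ) :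
    x ⬝ᵥ A *ᵥ x + x ⬝ᵥ B *ᵥ y + y ⬝ᵥ C *ᵥ x ≤ y ⬝ᵥ y := by
  have := h.dotProduct_mulVec_nonneg (Sum.elim x y)
  simp only [star_trivial, neg_mulVec, dotProduct_neg, fromBlocks_mulVec,
    sumElim_dotProduct_sumElim, Sum.elim_comp_inl, Sum.elim_comp_inr, neg_mulVec, one_mulVec,
    dotProduct_add, dotProduct_neg] at this
  linarith

theorem dotProduct_smul_transpose_mul_self_mulVec (K : Matrix n m ℝ) (α : ℝ) (x : m → ℝ) :
    x ⬝ᵥ (α • (Kᵀ * K)) *ᵥ x = α * (K *ᵥ x ⬝ᵥ K *ᵥ x) := by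
  rw [smul_mulVec, dotProduct_smul, ← mulVec_mulVec, dotProduct_transpose_mulVec, smul_eq_mul]

theorem lyapunov_deriv_le_of_lmi [DecidableEq n] {F : Matrix m m ℝ} {G : Matrix m n ℝ}
    {P : Matrix m m ℝ} {δ : ℝ}
    (hLMI : (-fromBlocks (P * F + Fᵀ * P + (2 * δ) • P) (P * G) (Gᵀ * P) (-1)).PosSemidef)
    (x : m → ℝ) (y : n → ℝ) :
    (F *ᵥ x + G *ᵥ y) ⬝ᵥ P *ᵥ x + x ⬝ᵥ P *ᵥ (F *ᵥ x + G *ᵥ y)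
      ≤ -(2 * δ) * (x ⬝ᵥ P *ᵥ x) + y ⬝ᵥ y := by
  have := hLMI.dotProduct_mulVec_fromBlocks_le x y
  simp only [add_mulVec, smul_mulVec, ← mulVec_mulVec, dotProduct_add, dotProduct_smul,
    dotProduct_transpose_mulVec, mulVec_add, add_dotProduct, smul_eq_mul] at this ⊢
  rw [dotProduct_comm (F *ᵥ x), dotProduct_comm (G *ᵥ y)]
  linarith

end Quadratic

theorem le_gronwallBound_of_hasDerivAt {f f' : ℝ → ℝ} {K ε a x : ℝ}
    (hf : ∀ t, HasDerivAt f (f' t) t) (bound : ∀ t, f' t ≤ K * f t + ε) (hx : a ≤ x) :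
    f x ≤ gronwallBound (f a) K ε (x - a) :=
  le_gronwallBound_of_liminf_deriv_right_le (b := x)
    (fun t _ => (hf t).continuousAt.continuousWithinAt)
    (fun t _ _ hr => (hf t).hasDerivWithinAt.liminf_right_slope_le hr) le_rfl
    (fun t _ => bound t) x ⟨hx, le_rfl⟩

theorem tendsto_gronwallBound_atTop {δ K ε : ℝ} (hK : K < 0) :
    Tendsto (gronwallBound δ K ε) atTop (𝓝 (-(ε / K))) := by
  rw [gronwallBound_of_K_ne_0 hK.ne]
  have hexp : Tendsto (fun x => Real.exp (K * x)) atTop (𝓝 0) :=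
    Real.tendsto_exp_atBot.comp (tendsto_id.const_mul_atTop_of_neg hK)
  simpa using (hexp.const_mul δ).add ((hexp.sub_const 1).const_mul (ε / K))

theorem Filter.limsup_le_of_le_of_tendsto {β : Type*} {l : Filter β} [l.NeBot] {u v : β → ℝ}
    {L : ℝ} (hu : IsCoboundedUnder (· ≤ ·) l u) (huv : u ≤ᶠ[l] v) (hv : Tendsto v l (𝓝 L)) :
    limsup u l ≤ L :=
  hv.limsup_eq ▸ limsup_le_limsup huv hu hv.isBoundedUnder_le

theorem stmt12_general {l n q : ℕ} (F : Matrix (Fin l) (Fin l) ℝ) (G : Matrix (Fin l) (Fin q) ℝ)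
    (K : Matrix (Fin n) (Fin l) ℝ)
    (e : ℝ → Fin l → ℝ) (w : ℝ → Fin q → ℝ) (ε δ α : ℝ) (hδ : 0 < δ) (hα : 0 < α)
    (hw : ∀ s : ℝ, Real.sqrt (w s ⬝ᵥ w s) ≤ ε)
    (he : ∀ s : ℝ, HasDerivAt e (F.mulVec (e s) + G.mulVec (w s)) s)
    (P : Matrix (Fin l) (Fin l) ℝ)
    (hLMI : (-(Matrix.fromBlocks (P * F + Fᵀ * P + (2 * δ) • P) (P * G)
        (Gᵀ * P) (-1))).PosSemidef)
    (hK : (P - α • (Kᵀ * K)).PosSemidef) :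
    Filter.limsup (fun s => Real.sqrt (K.mulVec (e s) ⬝ᵥ K.mulVec (e s))) Filter.atTop ≤
      ε * Real.sqrt (1 / (2 * α * δ)) := by
  obtain ⟨hε, hw⟩ : 0 ≤ ε ∧ ∀ s, w s ⬝ᵥ w s ≤ ε ^ 2 :=
    ⟨(Real.sqrt_nonneg _).trans (hw 0), fun s => (Real.sqrt_le_iff.1 (hw s)).2⟩
  set V : ℝ → ℝ := fun s => e s ⬝ᵥ P *ᵥ e s
  have hV_le : ∀ s, 0 ≤ s → V s ≤ gronwallBound (V 0) (-(2 * δ)) (ε ^ 2) s := fun s hs => by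
    simpa using le_gronwallBound_of_hasDerivAt (fun t => (he t).dotProduct ((he t).mulVec P))
      (fun t => (lyapunov_deriv_le_of_lmi hLMI (e t) (w t)).trans (by linarith [hw t])) hs
  have hKe : ∀ s, √(K *ᵥ e s ⬝ᵥ K *ᵥ e s) ≤ √(V s / α) := fun s => by
    have := hK.dotProduct_mulVec_le (e s)
    rw [dotProduct_smul_transpose_mul_self_mulVec] at this
    exact Real.sqrt_le_sqrt ((le_div_iff₀' hα).2 this)
  have hlim : Tendsto (fun s => √(gronwallBound (V 0) (-(2 * δ)) (ε ^ 2) s / α)) atTop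
      (𝓝 √(-(ε ^ 2 / -(2 * δ)) / α)) :=
    ((tendsto_gronwallBound_atTop (by linarith)).div_const α).sqrt
  refine (limsup_le_of_le_of_tendsto
    (isCoboundedUnder_le_of_le atTop fun s => Real.sqrt_nonneg _) ?_ hlim).trans_eq ?_
  · filter_upwards [eventually_ge_atTop 0] with s hs
    exact (hKe s).trans (Real.sqrt_le_sqrt (div_le_div_of_nonneg_right (hV_le s hs) hα.le))
  · rw [show -(ε ^ 2 / -(2 * δ)) / α = ε ^ 2 * (1 / (2 * α * δ)) by field_simp,
      Real.sqrt_mul (sq_nonneg ε), Real.sqrt_sq hε]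

/-- Ultimate-bound conclusion of Lemma 2 (Eq. (12)): under the LMI conditions,
`limsup_{t→∞} ‖K e(t)‖ ≤ ε √(1/(2αδ))` for any initial condition (Euclidean norm,
written via dot products). -/
theorem stmt12 {l n q : ℕ} (F : Matrix (Fin l) (Fin l) ℝ) (G : Matrix (Fin l) (Fin q) ℝ)
    (K : Matrix (Fin n) (Fin l) ℝ)
    (e : ℝ → Fin l → ℝ) (w : ℝ → Fin q → ℝ) (ε δ α : ℝ) (hδ : 0 < δ) (hα : 0 < α)
    (hw : ∀ s : ℝ, Real.sqrt (w s ⬝ᵥ w s) ≤ ε)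
    (he : ∀ s : ℝ, HasDerivAt e (F.mulVec (e s) + G.mulVec (w s)) s)
    (P : Matrix (Fin l) (Fin l) ℝ) (hPsymm : P.IsSymm) (hP : P.PosDef)
    (hLMI : (-(Matrix.fromBlocks (P * F + Fᵀ * P + (2 * δ) • P) (P * G)
        (Gᵀ * P) (-1))).PosSemidef)
    (hK : (P - α • (Kᵀ * K)).PosSemidef) :
    Filter.limsup (fun s => Real.sqrt (K.mulVec (e s) ⬝ᵥ K.mulVec (e s))) Filter.atTop ≤
      ε * Real.sqrt (1 / (2 * α * δ)) :=
  stmt12_general F G K e w ε δ α hδ hα hw he P hLMI hK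
end

section
/- Let F ∈ ℝ^{l×l} and suppose there exist a symmetric matrix N, a matrix M (both real, of some size d×d) and a symmetric positive definite P such that N ⊗ P + M ⊗ (PF) + Mᵀ ⊗ (PF)ᵀ ≺ 0. Then every eigenvalue z ∈ ℂ of F satisfies N + zM + z* Mᵀ ≺ 0 (as a complex Hermitian matrix), i.e., z lies in the LMI region D = {z ∈ ℂ : N + zM + z*Mᵀ ≺ 0}. -/
/-!
Let `v` be an eigenvector of `F` for `z` and `u ≠ 0`, and test the LMI on the complex vector
`u ⊗ v`. Since `v*(PF)v = z·v*Pv` and `v*(PF)ᵀv = z̄·v*Pv`, the Kronecker structure factors the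
quadratic form as `(v*Pv) · u*(N + zM + z̄Mᵀ)u`. A real negative definite form has negative real
part on nonzero complex vectors, and `v*Pv > 0`, so `u*(N + zM + z̄Mᵀ)u` has negative real part.
-/

open Matrix Kronecker
open scoped ComplexOrder

/-- A complex matrix is Hermitian negative definite: `Q = Qᴴ` and `vᴴ Q v < 0` for `v ≠ 0`.
(For a Hermitian `Q`, `vᴴ Q v` is real, so the condition is stated on the real part.) -/
def NegDefC {d : ℕ} (Q : Matrix (Fin d) (Fin d) ℂ) : Prop :=
  Q.IsHermitian ∧ ∀ v : Fin d → ℂ, v ≠ 0 → (star v ⬝ᵥ Q.mulVec v).re < 0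

def kroneckerVec {m n R : Type*} [Mul R] (u : m → R) (v : n → R) : m × n → R :=
  fun p => u p.1 * v p.2

section Kronecker

variable {m n R : Type*}

theorem kroneckerVec_ne_zero [MulZeroClass R] [NoZeroDivisors R] {u : m → R} {v : n → R}
    (hu : u ≠ 0) (hv : v ≠ 0) : kroneckerVec u v ≠ 0 := by
  obtain ⟨i, hi⟩ := Function.ne_iff.mp hu
  obtain ⟨j, hj⟩ := Function.ne_iff.mp hv
  exact Function.ne_iff.mpr ⟨(i, j), mul_ne_zero hi hj⟩

theorem star_kroneckerVec [CommMonoid R] [StarMul R] (u : m → R) (v : n → R) :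
    star (kroneckerVec u v) = kroneckerVec (star u) (star v) := by
  funext p
  exact star_mul' (u p.1) (v p.2)

variable [Fintype m] [Fintype n] [CommSemiring R]

theorem kroneckerVec_dotProduct_kroneckerVec (x u : m → R) (y v : n → R) :
    kroneckerVec x y ⬝ᵥ kroneckerVec u v = (x ⬝ᵥ u) * (y ⬝ᵥ v) := by
  simp only [kroneckerVec, dotProduct, Fintype.sum_prod_type, Finset.sum_mul_sum]
  exact Finset.sum_congr rfl fun i _ => Finset.sum_congr rfl fun j _ => mul_mul_mul_comm _ _ _ _

theorem kronecker_mulVec_kroneckerVec (A : Matrix m m R) (B : Matrix n n R) (u : m → R)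
    (v : n → R) : (A ⊗ₖ B) *ᵥ kroneckerVec u v = kroneckerVec (A *ᵥ u) (B *ᵥ v) := by
  funext p
  simp only [kroneckerVec, mulVec, dotProduct, kroneckerMap_apply, Fintype.sum_prod_type,
    Finset.sum_mul_sum]
  exact Finset.sum_congr rfl fun i _ => Finset.sum_congr rfl fun j _ => mul_mul_mul_comm _ _ _ _

theorem star_kroneckerVec_dotProduct_kronecker_mulVec [StarRing R] (A : Matrix m m R)
    (B : Matrix n n R) (u : m → R) (v : n → R) :
    star (kroneckerVec u v) ⬝ᵥ (A ⊗ₖ B) *ᵥ kroneckerVec u v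
      = (star u ⬝ᵥ A *ᵥ u) * (star v ⬝ᵥ B *ᵥ v) := by
  rw [star_kroneckerVec, kronecker_mulVec_kroneckerVec, kroneckerVec_dotProduct_kroneckerVec]

end Kronecker

section Eigenvector

variable {n R : Type*} [Fintype n] [CommSemiring R] [StarRing R] {B : Matrix n n R} {v : n → R}
  {z : R}

theorem star_dotProduct_mul_mulVec_of_mulVec_eq_smul (hv : B *ᵥ v = z • v) (A : Matrix n n R) :
    star v ⬝ᵥ (A * B) *ᵥ v = z * (star v ⬝ᵥ A *ᵥ v) := by
  rw [← mulVec_mulVec, hv, mulVec_smul, dotProduct_smul, smul_eq_mul]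

theorem star_dotProduct_conjTranspose_mul_mulVec_of_mulVec_eq_smul (hv : B *ᵥ v = z • v)
    (A : Matrix n n R) : star v ⬝ᵥ (Bᴴ * A) *ᵥ v = star z * (star v ⬝ᵥ A *ᵥ v) := by
  rw [← mulVec_mulVec, dotProduct_mulVec, ← star_mulVec, hv, star_smul, smul_dotProduct,
    smul_eq_mul]

end Eigenvector

theorem star_kroneckerVec_dotProduct_lmi_mulVec {m n R : Type*} [Fintype m] [Fintype n]
    [CommSemiring R] [StarRing R] {F P : Matrix n n R} {v : n → R} {z : R}
    (hv : F *ᵥ v = z • v) (hP : P.IsHermitian) (A B C : Matrix m m R) (u : m → R) :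
    star (kroneckerVec u v) ⬝ᵥ (A ⊗ₖ P + B ⊗ₖ (P * F) + C ⊗ₖ (P * F)ᴴ) *ᵥ kroneckerVec u v
      = (star v ⬝ᵥ P *ᵥ v) * (star u ⬝ᵥ (A + z • B + star z • C) *ᵥ u) := by
  simp only [add_mulVec, dotProduct_add, smul_mulVec, dotProduct_smul, smul_eq_mul,
    star_kroneckerVec_dotProduct_kronecker_mulVec, conjTranspose_mul, hP.eq,
    star_dotProduct_mul_mulVec_of_mulVec_eq_smul hv,
    star_dotProduct_conjTranspose_mul_mulVec_of_mulVec_eq_smul hv]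
  ring

section OfReal

variable {n : Type*}

theorem transpose_map_ofReal (A : Matrix n n ℝ) :
    Aᵀ.map (Complex.ofReal ·) = (A.map (Complex.ofReal ·))ᴴ := by
  ext
  simp

theorem conjTranspose_map_ofReal (A : Matrix n n ℝ) :
    (A.map (Complex.ofReal ·))ᴴ = (A.map (Complex.ofReal ·))ᵀ := by
  rw [← transpose_map_ofReal, transpose_map]

theorem Matrix.IsHermitian.map_ofReal {A : Matrix n n ℝ} (hA : A.IsHermitian) :
    (A.map (Complex.ofReal ·)).IsHermitian :=
  hA.map _ fun _ => (Complex.conj_ofReal _).symm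

theorem map_ofReal_kronecker {m : Type*} (A : Matrix m m ℝ) (B : Matrix n n ℝ) :
    (A ⊗ₖ B).map (Complex.ofReal ·) = A.map (Complex.ofReal ·) ⊗ₖ B.map (Complex.ofReal ·) := by
  ext
  simp

variable [Fintype n]

theorem map_ofReal_mul (A B : Matrix n n ℝ) :
    (A * B).map (Complex.ofReal ·) = A.map (Complex.ofReal ·) * B.map (Complex.ofReal ·) :=
  Matrix.map_mul (f := Complex.ofRealHom)

theorem re_star_dotProduct_map_ofReal_mulVec (Q : Matrix n n ℝ) (w : n → ℂ) :
    (star w ⬝ᵥ Q.map (Complex.ofReal ·) *ᵥ w).re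
      = (fun i => (w i).re) ⬝ᵥ Q *ᵥ (fun i => (w i).re)
        + (fun i => (w i).im) ⬝ᵥ Q *ᵥ (fun i => (w i).im) := by
  simp only [dotProduct, mulVec, Finset.mul_sum, ← Finset.sum_add_distrib, Complex.re_sum,
    Pi.star_apply, map_apply, Complex.star_def, Complex.mul_re, Complex.mul_im, Complex.conj_re,
    Complex.conj_im, Complex.ofReal_re, Complex.ofReal_im]
  refine Finset.sum_congr rfl fun i _ => Finset.sum_congr rfl fun j _ => ?_
  ring

theorem re_star_dotProduct_map_ofReal_mulVec_pos {Q : Matrix n n ℝ}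
    (hQ : ∀ x : n → ℝ, x ≠ 0 → 0 < x ⬝ᵥ Q *ᵥ x) {w : n → ℂ} (hw : w ≠ 0) :
    0 < (star w ⬝ᵥ Q.map (Complex.ofReal ·) *ᵥ w).re := by
  have hnonneg : ∀ x : n → ℝ, 0 ≤ x ⬝ᵥ Q *ᵥ x := fun x => by
    obtain rfl | hx := eq_or_ne x 0
    · simp
    · exact (hQ x hx).le
  rw [re_star_dotProduct_map_ofReal_mulVec]
  by_cases hre : (fun i => (w i).re) = 0
  · have him : (fun i => (w i).im) ≠ 0 := fun him =>
      hw (funext fun i => Complex.ext (congrFun hre i) (congrFun him i))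
    exact add_pos_of_nonneg_of_pos (hnonneg _) (hQ _ him)
  · exact add_pos_of_pos_of_nonneg (hQ _ hre) (hnonneg _)

theorem re_star_dotProduct_map_ofReal_mulVec_neg {Q : Matrix n n ℝ}
    (hQ : ∀ x : n → ℝ, x ≠ 0 → x ⬝ᵥ Q *ᵥ x < 0) {w : n → ℂ} (hw : w ≠ 0) :
    (star w ⬝ᵥ Q.map (Complex.ofReal ·) *ᵥ w).re < 0 := by
  have := re_star_dotProduct_map_ofReal_mulVec_pos (Q := -Q)
    (fun x hx => by simpa [neg_mulVec] using hQ x hx) hw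
  have hmap : (-Q).map (Complex.ofReal ·) = -Q.map (Complex.ofReal ·) := by ext; simp
  simpa [hmap, neg_mulVec] using this

theorem Matrix.PosDef.map_ofReal {P : Matrix n n ℝ} (hP : P.PosDef) :
    (P.map (Complex.ofReal ·)).PosDef := by
  have hPc := hP.isHermitian.map_ofReal
  refine .of_dotProduct_mulVec_pos hPc fun w hw => Complex.lt_def.mpr ⟨?_, ?_⟩
  · exact re_star_dotProduct_map_ofReal_mulVec_pos
      (fun x hx => by simpa using hP.dotProduct_mulVec_pos hx) hw
  · exact (hPc.im_star_dotProduct_mulVec_self w).symm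

end OfReal

theorem Complex.re_neg_of_re_mul_neg {c t : ℂ} (hc : 0 < c) (h : (c * t).re < 0) : t.re < 0 := by
  obtain ⟨hre, him⟩ := Complex.lt_def.mp hc
  rw [Complex.mul_re, ← him, Complex.zero_im, zero_mul, sub_zero] at h
  exact neg_of_mul_neg_right h (le_of_lt hre)

theorem Matrix.IsHermitian.add_smul_add_star_smul_conjTranspose {n R : Type*} [CommSemiring R]
    [StarRing R] {A : Matrix n n R} (hA : A.IsHermitian) (B : Matrix n n R) (z : R) :
    (A + z • B + star z • Bᴴ).IsHermitian := by
  rw [IsHermitian, conjTranspose_add, conjTranspose_add, conjTranspose_smul, conjTranspose_smul,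
    conjTranspose_conjTranspose, star_star, hA.eq, add_assoc, add_assoc, add_comm (star z • Bᴴ)]

theorem stmt13_general {l d : ℕ} (F : Matrix (Fin l) (Fin l) ℝ)
    (N M : Matrix (Fin d) (Fin d) ℝ) (hN : N.IsSymm)
    (P : Matrix (Fin l) (Fin l) ℝ) (hP : P.PosDef)
    (hLMI : ∀ v : (Fin d × Fin l) → ℝ, v ≠ 0 →
      v ⬝ᵥ (N ⊗ₖ P + M ⊗ₖ (P * F) + Mᵀ ⊗ₖ (P * F)ᵀ).mulVec v < 0)
    (z : ℂ)
    (hz : ∃ v : Fin l → ℂ, v ≠ 0 ∧ (F.map (Complex.ofReal ·)).mulVec v = z • v) :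
    NegDefC (N.map (Complex.ofReal ·) + z • M.map (Complex.ofReal ·)
        + (starRingEnd ℂ) z • (M.map (Complex.ofReal ·))ᵀ) := by
  obtain ⟨v, hv, hFv⟩ := hz
  have hPc := hP.map_ofReal
  rw [← conjTranspose_map_ofReal]
  refine ⟨(isHermitian_iff_isSymm.mpr hN).map_ofReal.add_smul_add_star_smul_conjTranspose _ _,
    fun u hu => ?_⟩
  have hQ := re_star_dotProduct_map_ofReal_mulVec_neg hLMI (kroneckerVec_ne_zero hu hv)
  simp only [Matrix.map_add _ Complex.ofReal_add, map_ofReal_kronecker, map_ofReal_mul,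
    transpose_map_ofReal] at hQ
  rw [star_kroneckerVec_dotProduct_lmi_mulVec hFv hPc.isHermitian] at hQ
  exact Complex.re_neg_of_re_mul_neg (hPc.dotProduct_mulVec_pos hv) hQ

/-- Chilali–Gahinet D-stability: if `N ⊗ P + M ⊗ (PF) + Mᵀ ⊗ (PF)ᵀ ≺ 0` for a symmetric
positive definite `P`, then every (complex) eigenvalue `z` of `F` satisfies
`N + zM + z*Mᵀ ≺ 0` as a complex Hermitian matrix, i.e. `z` lies in the LMI region `D`. -/
theorem stmt13 {l d : ℕ} (F : Matrix (Fin l) (Fin l) ℝ)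
    (N M : Matrix (Fin d) (Fin d) ℝ) (hN : N.IsSymm)
    (P : Matrix (Fin l) (Fin l) ℝ) (hPsymm : P.IsSymm) (hP : P.PosDef)
    (hLMI : ∀ v : (Fin d × Fin l) → ℝ, v ≠ 0 →
      v ⬝ᵥ (N ⊗ₖ P + M ⊗ₖ (P * F) + Mᵀ ⊗ₖ (P * F)ᵀ).mulVec v < 0)
    (z : ℂ)
    (hz : ∃ v : Fin l → ℂ, v ≠ 0 ∧ (F.map (Complex.ofReal ·)).mulVec v = z • v) :
    NegDefC (N.map (Complex.ofReal ·) + z • M.map (Complex.ofReal ·)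
        + (starRingEnd ℂ) z • (M.map (Complex.ofReal ·))ᵀ) :=
  stmt13_general F N M hN P hP hLMI z hz
end

section
/- Given a symmetric matrix N, matrix M, with D = {z ∈ ℂ : N + zM + z*Mᵀ ≺ 0} equal to the open disk of radius R centered at the origin (achieved with N = [[−R, 0],[0, −R]], M = [[0, 1],[0, 0]]), the condition N ⊗ P + M ⊗ (PF) + Mᵀ ⊗ (PF)ᵀ ≺ 0 for some P ≻ 0 holds if and only if all eigenvalues of F lie in the open disk |z| < R. -/
/-!
Reindexing `Fin 2 × Fin l` as `Fin l ⊕ Fin l` turns the LMI matrix into the block matrix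
`[[R P, -P F], [-(P F)ᵀ, R P]]`, whose Schur complement is `R⁻¹ (R² P - Fᵀ P F)`; so the LMI says
exactly that `P` solves the Stein inequality `Fᵀ P F ≺ R² P`.

Evaluating the Stein inequality at a complex eigenvector `v` of `F` with eigenvalue `z` gives
`(R² - |z|²) v* P v > 0`, hence `|z| < R`. Conversely, if the spectrum of `B = F / R` lies in the
open unit disc, Gelfand's formula gives `‖B ^ m‖ < 1` in the `L²` operator norm for some `m`, and
the truncated Gramian `P = ∑_{k < m} (B ^ k)ᵀ B ^ k` telescopes to
`P - Bᵀ P B = 1 - (B ^ m)ᵀ B ^ m ≻ 0`.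
-/

open Matrix Kronecker Filter Finset
open scoped ComplexOrder MatrixOrder

theorem EuclideanSpace.star_dotProduct_self {n 𝕜 : Type*} [Fintype n] [RCLike 𝕜] (x : n → 𝕜) :
    star x ⬝ᵥ x = ((‖WithLp.toLp 2 x‖ ^ 2 : ℝ) : 𝕜) := by
  rw [RCLike.ofReal_pow, ← inner_self_eq_norm_sq_to_K, EuclideanSpace.inner_eq_star_dotProduct,
    dotProduct_comm]

theorem spectrum.eventually_norm_pow_lt_one {A : Type*} [NormedRing A] [NormedAlgebra ℂ A]
    [CompleteSpace A] {a : A} (ha : spectralRadius ℂ a < 1) : ∀ᶠ m in atTop, ‖a ^ m‖ < 1 := by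
  filter_upwards [(spectrum.pow_nnnorm_pow_one_div_tendsto_nhds_spectralRadius a).eventually_lt_const
    ha, eventually_gt_atTop 0] with m hm hm0
  rw [one_div, ENNReal.rpow_inv_lt_iff (by positivity), ENNReal.one_rpow] at hm
  exact_mod_cast hm

def Equiv.sumSelfEquivFinTwoProd (α : Type*) : α ⊕ α ≃ Fin 2 × α :=
  (Equiv.boolProdEquivSum α).symm.trans (Equiv.prodCongr finTwoEquiv.symm (Equiv.refl α))

namespace Matrix

theorem posDef_submatrix_equiv {m n R : Type*} [Ring R] [PartialOrder R] [StarRing R]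
    {M : Matrix n n R} (e : m ≃ n) : (M.submatrix e e).PosDef ↔ M.PosDef :=
  ⟨fun h => by simpa using h.submatrix e.symm.injective, fun h => h.submatrix e.injective⟩

variable {m n : Type*} [Fintype m] [Fintype n]

theorem posDef_fromBlocks₁₁_iff {K : Type*} [CommRing K] [PartialOrder K] [StarRing K]
    [StarOrderedRing K] [DecidableEq m] {A : Matrix m m K} (B : Matrix m n K) (D : Matrix n n K)
    (hA : A.PosDef) [Invertible A] :
    (fromBlocks A B Bᴴ D).PosDef ↔ (D - Bᴴ * A⁻¹ * B).PosDef := by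
  rw [posDef_iff_dotProduct_mulVec, posDef_iff_dotProduct_mulVec,
    IsHermitian.fromBlocks₁₁ _ _ hA.1]
  refine and_congr_right fun _ => ⟨fun h y hy => ?_, fun h v hv => ?_⟩
  · have := h (x := -((A⁻¹ * B) *ᵥ y) ⊕ᵥ y) fun h0 => hy (congrArg (· ∘ Sum.inr) h0)
    rwa [dotProduct_mulVec, schur_complement_eq₁₁ B D _ _ hA.1, neg_add_cancel, dotProduct_zero,
      zero_add, ← dotProduct_mulVec] at this
  · rw [dotProduct_mulVec, ← Sum.elim_comp_inl_inr v, schur_complement_eq₁₁ B D _ _ hA.1,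
      ← dotProduct_mulVec, ← dotProduct_mulVec]
    by_cases hy : v ∘ Sum.inr = 0
    · have hx : v ∘ Sum.inl ≠ 0 := fun hx =>
        hv (funext fun | .inl i => congrFun hx i | .inr i => congrFun hy i)
      rw [hy, mulVec_zero, add_zero, mulVec_zero, dotProduct_zero, add_zero]
      exact hA.dotProduct_mulVec_pos hx
    · exact add_pos_of_nonneg_of_pos (hA.posSemidef.dotProduct_mulVec_nonneg _) (h hy)

theorem dotProduct_mulVec_map_ofReal (M : Matrix n n ℝ) (x : n → ℝ) :
    star (Complex.ofReal ∘ x) ⬝ᵥ M.map Complex.ofReal *ᵥ (Complex.ofReal ∘ x) =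
      ↑(x ⬝ᵥ M *ᵥ x) := by
  have hx : star (Complex.ofReal ∘ x) = Complex.ofReal ∘ x :=
    funext fun i => Complex.conj_ofReal _
  simp only [hx, dotProduct, mulVec, Function.comp_apply, map_apply]
  push_cast
  rfl

theorem PosDef.of_map_ofReal {M : Matrix n n ℝ} (hM : (M.map Complex.ofReal).PosDef) :
    M.PosDef := by
  refine posDef_iff_dotProduct_mulVec.mpr ⟨?_, fun {x} hx => ?_⟩
  · ext i j
    simpa using congrFun₂ hM.1 i j
  · have := hM.dotProduct_mulVec_pos (x := Complex.ofReal ∘ x)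
      fun h => hx (funext fun i => by simpa using congrFun h i)
    rw [dotProduct_mulVec_map_ofReal] at this
    simpa using this

theorem dotProduct_mulVec_conjTranspose_mul_mul {𝕜 : Type*} [RCLike 𝕜] (A P : Matrix n n 𝕜)
    (v : n → 𝕜) : star v ⬝ᵥ (Aᴴ * P * A) *ᵥ v = star (A *ᵥ v) ⬝ᵥ P *ᵥ (A *ᵥ v) := by
  rw [← mulVec_mulVec, ← mulVec_mulVec, dotProduct_mulVec, ← star_mulVec]

theorem norm_lt_of_posDef_stein {𝕜 : Type*} [RCLike 𝕜] {A P : Matrix n n 𝕜} {R : ℝ}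
    (hR : 0 ≤ R) (hP : P.PosDef) (hT : (R ^ 2 • P - Aᴴ * P * A).PosDef) {z : 𝕜} {v : n → 𝕜}
    (hv : v ≠ 0) (hAv : A *ᵥ v = z • v) : ‖z‖ < R := by
  have key : star v ⬝ᵥ (R ^ 2 • P - Aᴴ * P * A) *ᵥ v
      = ((R ^ 2 - ‖z‖ ^ 2 : ℝ) : 𝕜) * (star v ⬝ᵥ P *ᵥ v) := by
    rw [sub_mulVec, dotProduct_sub, dotProduct_mulVec_conjTranspose_mul_mul, hAv, star_smul,
      smul_dotProduct, mulVec_smul, dotProduct_smul, smul_mulVec, dotProduct_smul,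
      smul_eq_mul, smul_eq_mul, ← mul_assoc, RCLike.star_def, RCLike.conj_mul]
    simp only [RCLike.real_smul_eq_coe_mul]
    push_cast
    ring
  have hp := RCLike.pos_iff.mp (hP.dotProduct_mulVec_pos hv)
  have ht := RCLike.pos_iff.mp (hT.dotProduct_mulVec_pos hv)
  rw [key, RCLike.re_ofReal_mul] at ht
  have : ‖z‖ ^ 2 < R ^ 2 := by nlinarith [pos_of_mul_pos_left ht.1 hp.1.le]
  exact lt_of_pow_lt_pow_left₀ 2 hR this

variable [DecidableEq n]

theorem PosDef.map_ofReal_s19 {M : Matrix n n ℝ} (hM : M.PosDef) :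
    (M.map Complex.ofReal).PosDef := by
  obtain ⟨B, rfl⟩ := CStarAlgebra.nonneg_iff_eq_star_mul_self.mp hM.posSemidef.nonneg
  have hmap : (star B * B).map Complex.ofReal =
      (B.map Complex.ofReal)ᴴ * B.map Complex.ofReal := by
    ext i j
    simp [mul_apply]
  rw [hmap]
  exact (posSemidef_conjTranspose_mul_self _).posDef_iff_isUnit.mpr
    (hmap ▸ hM.isUnit.map Complex.ofRealHom.mapMatrix)

theorem map_ofReal_pow (B : Matrix n n ℝ) (k : ℕ) :
    (B ^ k).map Complex.ofReal = B.map Complex.ofReal ^ k :=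
  map_pow Complex.ofRealHom.mapMatrix B k

theorem exists_posDef_sub_conjTranspose_mul_mul {R : Type*} [CommRing R] [PartialOrder R]
    [StarRing R] [StarOrderedRing R] {B : Matrix n n R} {m : ℕ}
    (hm : (1 - (B ^ m)ᴴ * B ^ m).PosDef) :
    ∃ P : Matrix n n R, P.PosDef ∧ (P - Bᴴ * P * B).PosDef := by
  set P := ∑ k ∈ range m, (B ^ k)ᴴ * B ^ k
  have hstein : P - Bᴴ * P * B = 1 - (B ^ m)ᴴ * B ^ m := by
    have hshift : Bᴴ * P * B = ∑ k ∈ range m, (B ^ (k + 1))ᴴ * B ^ (k + 1) := by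
      simp only [P, Finset.mul_sum, Finset.sum_mul, pow_succ, conjTranspose_mul, Matrix.mul_assoc]
    rw [hshift, ← Finset.sum_sub_distrib, Finset.sum_range_sub' (fun k => (B ^ k)ᴴ * B ^ k)]
    simp
  rw [← hstein] at hm
  have hP : P.PosSemidef := posSemidef_sum _ fun k _ => posSemidef_conjTranspose_mul_self _
  exact ⟨P, by simpa using hm.add_posSemidef (hP.conjTranspose_mul_mul_same B), hm⟩

section L2OpNorm

open scoped Matrix.Norms.L2Operator

theorem spectralRadius_lt_one_of_eigenvalues (A : Matrix n n ℂ)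
    (h : ∀ z : ℂ, (∃ v : n → ℂ, v ≠ 0 ∧ A *ᵥ v = z • v) → ‖z‖ < 1) :
    spectralRadius ℂ A < 1 := by
  rcases (spectrum ℂ A).eq_empty_or_nonempty with he | hne
  · simp [spectralRadius, he]
  refine spectrum.spectralRadius_lt_of_forall_lt_of_nonempty hne fun z hz => ?_
  rw [← spectrum_toLin', ← Module.End.hasEigenvalue_iff_mem_spectrum] at hz
  obtain ⟨v, hv⟩ := hz.exists_hasEigenvector
  exact_mod_cast h z ⟨v, hv.2, hv.apply_eq_smul⟩

theorem posDef_one_sub_conjTranspose_mul_self_of_norm_lt_one {𝕜 : Type*} [RCLike 𝕜]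
    {A : Matrix n n 𝕜} (hA : ‖A‖ < 1) : (1 - Aᴴ * A).PosDef := by
  refine posDef_iff_dotProduct_mulVec.mpr
    ⟨by simp [IsHermitian, conjTranspose_sub], fun {x} hx => ?_⟩
  rw [sub_mulVec, one_mulVec, dotProduct_sub, ← mulVec_mulVec, dotProduct_mulVec, ← star_mulVec,
    EuclideanSpace.star_dotProduct_self, EuclideanSpace.star_dotProduct_self, ← RCLike.ofReal_sub,
    RCLike.ofReal_pos, sub_pos]
  have hx' : 0 < ‖WithLp.toLp 2 x‖ := norm_pos_iff.mpr (by simpa using hx)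
  gcongr
  exact (A.l2_opNorm_mulVec (WithLp.toLp 2 x)).trans_lt (by nlinarith)

theorem exists_posDef_stein {F : Matrix n n ℝ} {R : ℝ} (hR : 0 < R)
    (hF : ∀ z : ℂ, (∃ v : n → ℂ, v ≠ 0 ∧ F.map Complex.ofReal *ᵥ v = z • v) → ‖z‖ < R) :
    ∃ P : Matrix n n ℝ, P.PosDef ∧ (R ^ 2 • P - Fᵀ * P * F).PosDef := by
  set B := R⁻¹ • F
  have hB : spectralRadius ℂ (B.map Complex.ofReal) < 1 := by
    refine spectralRadius_lt_one_of_eigenvalues _ fun z ⟨v, hv, hBv⟩ => ?_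
    have hFv : F.map Complex.ofReal *ᵥ v = ((R : ℂ) * z) • v := by
      have : F.map Complex.ofReal = (R : ℂ) • B.map Complex.ofReal := by
        ext i j
        simp [B, hR.ne']
      rw [this, smul_mulVec, hBv, smul_smul]
    have := hF _ ⟨v, hv, hFv⟩
    rw [norm_mul, Complex.norm_real, Real.norm_of_nonneg hR.le] at this
    exact (mul_lt_iff_lt_one_right hR).mp this
  obtain ⟨m, hm⟩ := (spectrum.eventually_norm_pow_lt_one hB).exists
  have hBm : (1 - (B ^ m)ᴴ * B ^ m).PosDef := by
    refine PosDef.of_map_ofReal ?_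
    have hmap : (1 - (B ^ m)ᴴ * B ^ m).map Complex.ofReal
        = 1 - ((B ^ m).map Complex.ofReal)ᴴ * (B ^ m).map Complex.ofReal := by
      ext i j
      simp [mul_apply, one_apply, apply_ite, -transpose_pow, -conjTranspose_pow]
    rw [hmap, map_ofReal_pow]
    exact posDef_one_sub_conjTranspose_mul_self_of_norm_lt_one hm
  obtain ⟨P, hP, hPB⟩ := exists_posDef_sub_conjTranspose_mul_mul hBm
  have heq : R ^ 2 • P - Fᵀ * P * F = R ^ 2 • (P - Bᴴ * P * B) := by
    simp only [B, conjTranspose_eq_transpose_of_trivial, transpose_smul, Matrix.smul_mul,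
      Matrix.mul_smul, smul_sub, smul_smul]
    rw [show R ^ 2 * (R⁻¹ * R⁻¹) = 1 by field_simp, one_smul]
  exact ⟨P, hP, heq ▸ hPB.smul (pow_pos hR 2)⟩

end L2OpNorm

end Matrix

theorem diskLMI_submatrix_eq_fromBlocks {n : Type*} [Fintype n] (R : ℝ) (P F : Matrix n n ℝ) :
    (-(!![-R, 0; 0, -R] ⊗ₖ P + !![0, 1; 0, 0] ⊗ₖ (P * F) + !![0, 1; 0, 0]ᵀ ⊗ₖ (P * F)ᵀ)).submatrix
        (Equiv.sumSelfEquivFinTwoProd n) (Equiv.sumSelfEquivFinTwoProd n) =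
      fromBlocks (R • P) (-(P * F)) (-(P * F))ᴴ (R • P) := by
  ext (i | i) (j | j) <;> simp [Equiv.sumSelfEquivFinTwoProd, finTwoEquiv]

theorem posDef_diskLMI_iff {n : Type*} [Fintype n] [DecidableEq n] {R : ℝ} (hR : 0 < R)
    {P : Matrix n n ℝ} (hP : P.PosDef) (F : Matrix n n ℝ) :
    (-(!![-R, 0; 0, -R] ⊗ₖ P + !![0, 1; 0, 0] ⊗ₖ (P * F) + !![0, 1; 0, 0]ᵀ ⊗ₖ (P * F)ᵀ)).PosDef ↔
      (R ^ 2 • P - Fᵀ * P * F).PosDef := by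
  have hPt : P.IsSymm := by simpa using hP.1
  have hdet : IsUnit P.det := (isUnit_iff_isUnit_det P).mp hP.isUnit
  have := invertibleOfNonzero hR.ne'
  have := (hP.smul hR).isUnit.invertible
  have hschur : R • P - (-(P * F))ᴴ * (R • P)⁻¹ * (-(P * F)) =
      R⁻¹ • (R ^ 2 • P - Fᵀ * P * F) := by
    rw [inv_smul P R hdet, invOf_eq_inv]
    simp only [conjTranspose_eq_transpose_of_trivial, transpose_neg, transpose_mul, hPt.eq,
      neg_mul, mul_neg, neg_neg, Matrix.mul_smul, Matrix.smul_mul]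
    rw [Matrix.mul_assoc (Fᵀ * P), ← Matrix.mul_assoc P⁻¹, P.nonsing_inv_mul hdet, Matrix.one_mul,
      smul_sub, smul_smul, show R⁻¹ * R ^ 2 = R by field_simp]
  rw [← posDef_submatrix_equiv (Equiv.sumSelfEquivFinTwoProd n), diskLMI_submatrix_eq_fromBlocks,
    posDef_fromBlocks₁₁_iff _ _ (hP.smul hR), hschur]
  exact ⟨fun h => by simpa [smul_smul, hR.ne'] using h.smul hR, fun h => h.smul (inv_pos.2 hR)⟩

/-- For the LMI region given by the open disk of radius `R` (with `N = [[−R,0],[0,−R]]`,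
`M = [[0,1],[0,0]]`), the condition `N ⊗ P + M ⊗ (PF) + Mᵀ ⊗ (PF)ᵀ ≺ 0` for some symmetric
`P ≻ 0` holds iff all eigenvalues of `F` lie in the open disk `|z| < R`. -/
theorem stmt19 {l : ℕ} (F : Matrix (Fin l) (Fin l) ℝ) (R : ℝ) (hR : 0 < R)
    (N M : Matrix (Fin 2) (Fin 2) ℝ)
    (hN : N = !![-R, 0; 0, -R]) (hM : M = !![0, 1; 0, 0]) :
    (∃ P : Matrix (Fin l) (Fin l) ℝ,
        P.IsSymm ∧ P.PosDef ∧
          (-(N ⊗ₖ P + M ⊗ₖ (P * F) + Mᵀ ⊗ₖ (P * F)ᵀ)).PosDef) ↔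
      ∀ z : ℂ,
        (∃ v : Fin l → ℂ, v ≠ 0 ∧ (F.map (Complex.ofReal ·)).mulVec v = z • v) →
          ‖z‖ < R := by
  subst hN hM
  constructor
  · rintro ⟨P, -, hP, hS⟩ z ⟨v, hv, hFv⟩
    have hT := ((posDef_diskLMI_iff hR hP F).mp hS).map_ofReal_s19
    have hmap : (R ^ 2 • P - Fᵀ * P * F).map Complex.ofReal = R ^ 2 • P.map Complex.ofReal -
        (F.map Complex.ofReal)ᴴ * P.map Complex.ofReal * F.map Complex.ofReal := by
      ext i j
      simp [mul_apply, Finset.sum_mul]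
    rw [hmap] at hT
    exact norm_lt_of_posDef_stein hR.le hP.map_ofReal_s19 hT hv hFv
  · intro h
    obtain ⟨P, hP, hT⟩ := exists_posDef_stein hR h
    exact ⟨P, by simpa using hP.1, hP, (posDef_diskLMI_iff hR hP F).mpr hT⟩
end
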